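/- arXiv:1703.05879 — 4 statements merged into one kernel-verified Lean document; each statement's English description precedes it below -/
import Mathlib

section
/- Let 𝔤 be a finite-dimensional Lie algebra over a field k and θ a diagonalizable Lie algebra automorphism of 𝔤, i.e. 𝔤 = ⊕_{μ∈Δ} 𝔤_μ where Δ ⊆ k is the set of eigenvalues of θ and 𝔤_μ = ker(θ − μ·id). Then the Lie subalgebra 𝐠 of 𝔤 generated by the eigenspaces 𝔤_μ with μ ≠ 1 is an ideal of 𝔤. -/
/-!
The eigenvalues of a Lie algebra endomorphism `θ` multiply under the bracket,
`⁅𝔤_α, 𝔤_β⁆ ⊆ 𝔤_{αβ}`. In particular the fixed space `𝔤_1` maps each generating eigenspace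
`𝔤_μ` (`μ ≠ 1`) into itself, hence normalizes the Lie subalgebra they generate. That subalgebra
normalizes itself, so its normalizer contains every eigenspace, and therefore all of `𝔤`.
-/

theorem Module.End.lie_mem_eigenspace_mul {R L : Type*} [CommRing R] [LieRing L]
    [LieAlgebra R L] {θ : Module.End R L} (hθ : ∀ x y : L, θ ⁅x, y⁆ = ⁅θ x, θ y⁆)
    {α β : R} {x y : L} (hx : x ∈ θ.eigenspace α) (hy : y ∈ θ.eigenspace β) :
    ⁅x, y⁆ ∈ θ.eigenspace (α * β) := by
  rw [Module.End.mem_eigenspace_iff] at hx hy ⊢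
  rw [hθ, hx, hy, smul_lie, lie_smul, smul_smul]

theorem LieSubalgebra.mem_normalizer_lieSpan_of_lie_mem {R L : Type*} [CommRing R] [LieRing L]
    [LieAlgebra R L] {s : Set L} {x : L} (h : ∀ z ∈ s, ⁅x, z⁆ ∈ lieSpan R L s) :
    x ∈ (lieSpan R L s).normalizer := by
  rw [mem_normalizer_iff]
  intro y hy
  induction hy using lieSpan_induction with
  | mem z hz => exact h z hz
  | zero => simp
  | add a b _ _ ha hb => simpa only [lie_add] using add_mem ha hb
  | smul r a _ ha => simpa only [lie_smul] using SMulMemClass.smul_mem r ha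
  | lie a b haS hbS ha hb =>
    rw [leibniz_lie]
    exact add_mem (lie_mem _ ha hbS) (lie_mem _ haS hb)

theorem lieSpan_ne_one_eigenspaces_isIdeal_general
    {k 𝔤 : Type*} [Field k] [LieRing 𝔤] [LieAlgebra k 𝔤]
    (θ : Module.End k 𝔤)
    (hbr : ∀ x y : 𝔤, θ ⁅x, y⁆ = ⁅θ x, θ y⁆)
    (hdiag : ⨆ μ : k, θ.eigenspace μ = ⊤) :
    ∀ x y : 𝔤,
      y ∈ LieSubalgebra.lieSpan k 𝔤 (⋃ μ ∈ {μ : k | μ ≠ 1}, (θ.eigenspace μ : Set 𝔤)) →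
      ⁅x, y⁆ ∈ LieSubalgebra.lieSpan k 𝔤 (⋃ μ ∈ {μ : k | μ ≠ 1}, (θ.eigenspace μ : Set 𝔤)) := by
  set s : Set 𝔤 := ⋃ μ ∈ {μ : k | μ ≠ 1}, (θ.eigenspace μ : Set 𝔤)
  set N := (LieSubalgebra.lieSpan k 𝔤 s).normalizer
  have mem_s {μ : k} (hμ : μ ≠ 1) {z : 𝔤} (hz : z ∈ θ.eigenspace μ) : z ∈ s :=
    Set.mem_biUnion (x := μ) hμ hz
  have fixed_le : θ.eigenspace 1 ≤ N.toSubmodule := fun x hx ↦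
    LieSubalgebra.mem_normalizer_lieSpan_of_lie_mem fun z hz ↦ by
      obtain ⟨μ, hμ, hzμ⟩ := Set.mem_iUnion₂.1 hz
      exact LieSubalgebra.subset_lieSpan <|
        mem_s hμ (by simpa using Module.End.lie_mem_eigenspace_mul hbr hx hzμ)
  have eigenspace_le (μ : k) : θ.eigenspace μ ≤ N.toSubmodule := by
    by_cases hμ : μ = 1
    · exact hμ ▸ fixed_le
    · exact fun z hz ↦ LieSubalgebra.le_normalizer _ (LieSubalgebra.subset_lieSpan (mem_s hμ hz))
  intro x y hy
  have hx : x ∈ N := (hdiag ▸ iSup_le eigenspace_le : ⊤ ≤ N.toSubmodule) Submodule.mem_top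
  exact (LieSubalgebra.mem_normalizer_iff _ x).1 hx y hy

/-- Let `𝔤` be a finite-dimensional Lie algebra over a field `k` and `θ` a
diagonalizable Lie algebra automorphism of `𝔤` (i.e. `𝔤` is the direct sum of the eigenspaces
`𝔤_μ = ker (θ - μ • id)`).  Then the Lie subalgebra of `𝔤` generated by the eigenspaces `𝔤_μ`
with `μ ≠ 1` is an ideal of `𝔤`: it is closed under bracketing with arbitrary elements. -/
theorem lieSpan_ne_one_eigenspaces_isIdeal
    {k 𝔤 : Type*} [Field k] [LieRing 𝔤] [LieAlgebra k 𝔤] [FiniteDimensional k 𝔤]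
    (θ : Module.End k 𝔤) (hbij : Function.Bijective θ)
    (hbr : ∀ x y : 𝔤, θ ⁅x, y⁆ = ⁅θ x, θ y⁆)
    (hdiag : ⨆ μ : k, θ.eigenspace μ = ⊤) :
    ∀ x y : 𝔤,
      y ∈ LieSubalgebra.lieSpan k 𝔤 (⋃ μ ∈ {μ : k | μ ≠ 1}, (θ.eigenspace μ : Set 𝔤)) →
      ⁅x, y⁆ ∈ LieSubalgebra.lieSpan k 𝔤 (⋃ μ ∈ {μ : k | μ ≠ 1}, (θ.eigenspace μ : Set 𝔤)) :=
  lieSpan_ne_one_eigenspaces_isIdeal_general θ hbr hdiag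
end

section
/- Let 𝔤 be a finite-dimensional Lie algebra over a field k and θ a diagonalizable Lie algebra automorphism of 𝔤, with set of eigenvalues Δ ⊆ k and eigenspaces 𝔤_μ = ker(θ − μ·id), so 𝔤 = ⊕_{μ∈Δ} 𝔤_μ. Suppose S ⊆ Δ has the property that for every μ ∈ S and every ν ∈ Δ \ S, if μν ∈ Δ then μν ∈ S. Then the Lie subalgebra 𝐠' of 𝔤 generated by ⊕_{μ∈S} 𝔤_μ is an ideal of 𝔤. -/
/-! The bracket of eigenvectors of `θ` for `ν` and `μ` is an eigenvector for `μ * ν`. Since the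
eigenspaces span `𝔤`, it suffices to bracket a generator `y ∈ 𝔤_μ` (`μ ∈ S`) with an
eigenvector `x ∈ 𝔤_ν`: if `ν ∈ S` both are generators, and otherwise `⁅x, y⁆` is either zero or an
eigenvector whose eigenvalue `μ * ν` lies in `S` by the closure hypothesis. A Lie subalgebra
whose generators bracket into it with everything is an ideal, by the Jacobi identity. -/

namespace LieSubalgebra

variable {R L : Type*} [CommRing R] [LieRing L] [LieAlgebra R L]

theorem lie_mem_lieSpan_of_lie_generator_mem {s : Set L}
    (hs : ∀ x : L, ∀ y ∈ s, ⁅x, y⁆ ∈ lieSpan R L s) (x : L) {y : L} (hy : y ∈ lieSpan R L s) :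
    ⁅x, y⁆ ∈ lieSpan R L s := by
  induction hy using lieSpan_induction generalizing x with
  | mem y hy => exact hs x y hy
  | zero => simp
  | add a b _ _ ha hb => simpa only [lie_add] using add_mem (ha x) (hb x)
  | smul c a _ ha => simpa only [lie_smul] using (lieSpan R L s).smul_mem c (ha x)
  | lie a b haL hbL ha hb =>
    rw [leibniz_lie]
    exact add_mem (lie_mem _ (ha x) hbL) (lie_mem _ haL (hb x))

end LieSubalgebra

namespace Module.End

variable {R L : Type*} [CommRing R] [LieRing L] [LieAlgebra R L]

theorem lie_mem_eigenspace_mul_s2 {θ : End R L} (hbr : ∀ x y : L, θ ⁅x, y⁆ = ⁅θ x, θ y⁆)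
    {μ ν : R} {x y : L} (hx : x ∈ θ.eigenspace μ) (hy : y ∈ θ.eigenspace ν) :
    ⁅x, y⁆ ∈ θ.eigenspace (μ * ν) := by
  rw [mem_eigenspace_iff] at hx hy ⊢
  rw [hbr, hx, hy, smul_lie, lie_smul, smul_smul]

end Module.End

open Module.End LieSubalgebra in
theorem lie_eigenvector_mem_lieSpan_closedEigenvalueSet
    {k 𝔤 : Type*} [Field k] [LieRing 𝔤] [LieAlgebra k 𝔤]
    {θ : Module.End k 𝔤} (hbr : ∀ x y : 𝔤, θ ⁅x, y⁆ = ⁅θ x, θ y⁆) {S : Set k}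
    (hclosed : ∀ μ ∈ S, ∀ ν : k, θ.HasEigenvalue ν → ν ∉ S →
      θ.HasEigenvalue (μ * ν) → μ * ν ∈ S)
    {μ ν : k} (hμ : μ ∈ S) {x y : 𝔤} (hx : x ∈ θ.eigenspace ν) (hy : y ∈ θ.eigenspace μ) :
    ⁅x, y⁆ ∈ lieSpan k 𝔤 (⋃ μ ∈ S, (θ.eigenspace μ : Set 𝔤)) := by
  have generator_mem {μ : k} (hμ : μ ∈ S) {z : 𝔤} (hz : z ∈ θ.eigenspace μ) :
      z ∈ lieSpan k 𝔤 (⋃ μ ∈ S, (θ.eigenspace μ : Set 𝔤)) :=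
    subset_lieSpan (Set.mem_biUnion hμ hz)
  by_cases hν : ν ∈ S
  · exact lie_mem _ (generator_mem hν hx) (generator_mem hμ hy)
  by_cases hxy : ⁅x, y⁆ = 0
  · simp [hxy]
  have hx0 : x ≠ 0 := by rintro rfl; simp at hxy
  have hxy_mem : ⁅x, y⁆ ∈ θ.eigenspace (μ * ν) := mul_comm ν μ ▸ lie_mem_eigenspace_mul_s2 hbr hx hy
  exact generator_mem (hclosed μ hμ ν (hasEigenvalue_of_hasEigenvector ⟨hx, hx0⟩) hν
    (hasEigenvalue_of_hasEigenvector ⟨hxy_mem, hxy⟩)) hxy_mem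

theorem lieSpan_closedEigenvalueSet_isIdeal_general
    {k 𝔤 : Type*} [Field k] [LieRing 𝔤] [LieAlgebra k 𝔤]
    (θ : Module.End k 𝔤)
    (hbr : ∀ x y : 𝔤, θ ⁅x, y⁆ = ⁅θ x, θ y⁆)
    (hdiag : ⨆ μ : k, θ.eigenspace μ = ⊤)
    (S : Set k)
    (hclosed : ∀ μ ∈ S, ∀ ν : k, θ.HasEigenvalue ν → ν ∉ S →
      θ.HasEigenvalue (μ * ν) → μ * ν ∈ S) :
    ∀ x y : 𝔤,
      y ∈ LieSubalgebra.lieSpan k 𝔤 (⋃ μ ∈ S, (θ.eigenspace μ : Set 𝔤)) →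
      ⁅x, y⁆ ∈ LieSubalgebra.lieSpan k 𝔤 (⋃ μ ∈ S, (θ.eigenspace μ : Set 𝔤)) := by
  refine LieSubalgebra.lie_mem_lieSpan_of_lie_generator_mem fun x y hy => ?_
  obtain ⟨μ, hμ, hy⟩ := Set.mem_iUnion₂.mp hy
  refine Submodule.iSup_induction _ (motive := (⁅·, y⁆ ∈ LieSubalgebra.lieSpan k 𝔤 _))
    (hdiag ▸ Submodule.mem_top : x ∈ ⨆ ν : k, θ.eigenspace ν) ?_ (by simp) ?_
  · exact fun ν x hx => lie_eigenvector_mem_lieSpan_closedEigenvalueSet hbr hclosed hμ hx hy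
  · exact fun a b ha hb => by simpa only [add_lie] using LieSubalgebra.add_mem _ ha hb

/-- Let `𝔤` be a finite-dimensional Lie algebra over a field `k` and `θ` a
diagonalizable Lie algebra automorphism of `𝔤` with eigenvalue set `Δ` and eigenspaces
`𝔤_μ = ker (θ - μ • id)`.  Suppose `S ⊆ Δ` satisfies: for every `μ ∈ S` and every
`ν ∈ Δ \ S`, if `μν ∈ Δ` then `μν ∈ S`.  Then the Lie subalgebra of `𝔤` generated by
`⊕_{μ ∈ S} 𝔤_μ` is an ideal of `𝔤` (closed under bracketing with arbitrary elements). -/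
theorem lieSpan_closedEigenvalueSet_isIdeal
    {k 𝔤 : Type*} [Field k] [LieRing 𝔤] [LieAlgebra k 𝔤] [FiniteDimensional k 𝔤]
    (θ : Module.End k 𝔤) (hbij : Function.Bijective θ)
    (hbr : ∀ x y : 𝔤, θ ⁅x, y⁆ = ⁅θ x, θ y⁆)
    (hdiag : ⨆ μ : k, θ.eigenspace μ = ⊤)
    (S : Set k) (hS : ∀ μ ∈ S, θ.HasEigenvalue μ)
    (hclosed : ∀ μ ∈ S, ∀ ν : k, θ.HasEigenvalue ν → ν ∉ S →
      θ.HasEigenvalue (μ * ν) → μ * ν ∈ S) :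
    ∀ x y : 𝔤,
      y ∈ LieSubalgebra.lieSpan k 𝔤 (⋃ μ ∈ S, (θ.eigenspace μ : Set 𝔤)) →
      ⁅x, y⁆ ∈ LieSubalgebra.lieSpan k 𝔤 (⋃ μ ∈ S, (θ.eigenspace μ : Set 𝔤)) :=
  lieSpan_closedEigenvalueSet_isIdeal_general θ hbr hdiag S hclosed
end

section
/- Let V be a finite-dimensional complex normed vector space of dimension d and A an invertible linear endomorphism of V. Let ε ≥ 0 and suppose every eigenvalue λ of A satisfies (1+ε)^{-1} ≤ |λ| ≤ 1+ε. Then there exists a constant C > 0 such that for all n ∈ ℤ, the operator norm satisfies ‖Aⁿ‖ ≤ C·(1+ε)^{|n|}·(1+|n|)^{d}. In particular, if every eigenvalue of A has modulus exactly 1 (ε = 0), then ‖Aⁿ‖ ≤ C(1+|n|)^{d} for all n ∈ ℤ. -/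
/-!
On the generalized eigenspace of `A` for `μ`, write `A = μ + N` with `N ^ d = 0`; the binomial
formula then gives `‖Aⁿ v‖ ≤ K_v (1 + ε)ⁿ (1 + n)ᵈ` for every vector `v`, since `V` is spanned
by generalized eigenvectors. The uniform boundedness principle turns these pointwise bounds
into a bound on `‖Aⁿ‖`. Negative powers are powers of `A⁻¹`, whose eigenvalues are the inverses
of those of `A`, hence again of modulus at most `1 + ε`.
-/

open Module Finset

theorem Module.End.pow_apply_eq_sum_of_pow_sub_smul_apply_eq_zero {R M : Type*} [CommRing R]
    [AddCommGroup M] [Module R M] {f : End R M} {μ : R} {k : ℕ} {v : M}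
    (hv : ((f - μ • 1) ^ k) v = 0) (n : ℕ) :
    (f ^ n) v = ∑ j ∈ range k, n.choose j • μ ^ (n - j) • ((f - μ • 1) ^ j) v := by
  set N := f - μ • 1
  have hN : ∀ j, k ≤ j → (N ^ j) v = 0 := fun j hj ↦ by
    rw [← Nat.sub_add_cancel hj, pow_add, Module.End.mul_apply, hv, map_zero]
  calc (f ^ n) v = ((N + μ • 1) ^ n) v := by rw [sub_add_cancel]
    _ = ∑ j ∈ range (n + 1), n.choose j • μ ^ (n - j) • (N ^ j) v := by
      rw [((Commute.one_right N).smul_right μ).add_pow, LinearMap.sum_apply]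
      refine sum_congr rfl fun j _ ↦ ?_
      simp [smul_pow, map_nsmul, smul_comm (μ ^ (n - j))]
    _ = ∑ j ∈ range (n + 1 + k), n.choose j • μ ^ (n - j) • (N ^ j) v :=
      sum_subset (range_subset_range.2 (by omega)) fun j hj hj' ↦ by
        rw [Nat.choose_eq_zero_of_lt (by simp at hj'; omega), zero_smul]
    _ = ∑ j ∈ range k, n.choose j • μ ^ (n - j) • (N ^ j) v :=
      (sum_subset (range_subset_range.2 (by omega)) fun j _ hj ↦ by
        rw [hN j (by simpa using hj), smul_zero, smul_zero]).symm

theorem Module.End.norm_pow_apply_le_of_pow_sub_smul_apply_eq_zero {𝕜 V : Type*} [NormedField 𝕜]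
    [SeminormedAddCommGroup V] [NormedSpace 𝕜 V] {f : End 𝕜 V} {μ : 𝕜} {k : ℕ} {v : V}
    (hv : ((f - μ • 1) ^ k) v = 0) {r : ℝ} (hr : 1 ≤ r) (hμ : ‖μ‖ ≤ r) (n : ℕ) :
    ‖(f ^ n) v‖ ≤ (∑ j ∈ range k, ‖((f - μ • 1) ^ j) v‖) * (r ^ n * (1 + n) ^ k) := by
  rw [f.pow_apply_eq_sum_of_pow_sub_smul_apply_eq_zero hv, sum_mul]
  refine (norm_sum_le _ _).trans (sum_le_sum fun j hj ↦ ?_)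
  have hj : j < k := mem_range.1 hj
  have hchoose : (n.choose j : ℝ) ≤ (1 + n) ^ k := calc
    (n.choose j : ℝ) ≤ (n : ℝ) ^ j := mod_cast Nat.choose_le_pow n j
    _ ≤ (1 + n) ^ j := by gcongr; linarith
    _ ≤ (1 + n) ^ k := pow_le_pow_right₀ (by linarith [n.cast_nonneg (α := ℝ)]) hj.le
  have hpow : ‖μ‖ ^ (n - j) ≤ r ^ n := calc
    ‖μ‖ ^ (n - j) ≤ r ^ (n - j) := by gcongr
    _ ≤ r ^ n := pow_le_pow_right₀ hr (Nat.sub_le n j)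
  calc ‖n.choose j • μ ^ (n - j) • ((f - μ • 1) ^ j) v‖
      ≤ n.choose j * (‖μ‖ ^ (n - j) * ‖((f - μ • 1) ^ j) v‖) := by
        rw [← norm_pow, ← norm_smul]; exact norm_nsmul_le
    _ ≤ (1 + n) ^ k * (r ^ n * ‖((f - μ • 1) ^ j) v‖) := by gcongr
    _ = ‖((f - μ • 1) ^ j) v‖ * (r ^ n * (1 + n) ^ k) := by ring

theorem Module.End.exists_norm_pow_apply_le {𝕜 V : Type*} [NormedField 𝕜] [IsAlgClosed 𝕜]
    [SeminormedAddCommGroup V] [NormedSpace 𝕜 V] [FiniteDimensional 𝕜 V] {f : End 𝕜 V} {r : ℝ}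
    (hr : 1 ≤ r) (hf : ∀ μ, f.HasEigenvalue μ → ‖μ‖ ≤ r) (v : V) :
    ∃ K, ∀ n : ℕ, ‖(f ^ n) v‖ ≤ K * (r ^ n * (1 + n) ^ finrank 𝕜 V) := by
  have hv : v ∈ ⨆ μ, f.maxGenEigenspace μ := by
    rw [f.iSup_maxGenEigenspace_eq_top]; exact Submodule.mem_top
  refine Submodule.iSup_induction _ (motive := fun v ↦ ∃ K, ∀ n : ℕ,
    ‖(f ^ n) v‖ ≤ K * (r ^ n * (1 + n) ^ finrank 𝕜 V)) hv (fun μ w hw ↦ ?_) ⟨0, by simp⟩ ?_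
  · rcases eq_or_ne w 0 with rfl | hw0
    · exact ⟨0, by simp⟩
    rw [maxGenEigenspace_eq_genEigenspace_finrank] at hw
    have hμ : f.HasEigenvalue μ :=
      hasEigenvalue_of_hasGenEigenvalue (k := finrank 𝕜 V) fun h ↦ hw0 (by rwa [h] at hw)
    exact ⟨_, norm_pow_apply_le_of_pow_sub_smul_apply_eq_zero (mem_genEigenspace_nat.1 hw) hr
      (hf μ hμ)⟩
  · rintro x y ⟨Kx, hx⟩ ⟨Ky, hy⟩
    exact ⟨Kx + Ky, fun n ↦ by
      rw [map_add, add_mul]; exact (norm_add_le _ _).trans (add_le_add (hx n) (hy n))⟩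

theorem ContinuousLinearMap.exists_opNorm_le_mul_of_forall_norm_apply_le_mul
    {𝕜 E F ι : Type*} [RCLike 𝕜] [SeminormedAddCommGroup E] [NormedSpace 𝕜 E] [CompleteSpace E]
    [SeminormedAddCommGroup F] [NormedSpace 𝕜 F] {T : ι → E →L[𝕜] F} {g : ι → ℝ}
    (hg : ∀ i, 0 < g i) (h : ∀ x, ∃ K, ∀ i, ‖T i x‖ ≤ K * g i) :
    ∃ C, 0 < C ∧ ∀ i, ‖T i‖ ≤ C * g i := by
  have hnorm : ∀ i, ‖(g i : 𝕜)⁻¹‖ = (g i)⁻¹ := fun i ↦ by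
    rw [norm_inv, RCLike.norm_ofReal, abs_of_pos (hg i)]
  obtain ⟨C, hC⟩ := banach_steinhaus (g := fun i ↦ (g i : 𝕜)⁻¹ • T i) fun x ↦ by
    obtain ⟨K, hK⟩ := h x
    refine ⟨K, fun i ↦ ?_⟩
    rw [smul_apply, norm_smul, hnorm, inv_mul_le_iff₀ (hg i)]
    exact (hK i).trans_eq (mul_comm _ _)
  refine ⟨max C 1, by positivity, fun i ↦ ?_⟩
  have hCi := hC i
  rw [norm_smul, hnorm, inv_mul_le_iff₀ (hg i)] at hCi
  rw [mul_comm (max C 1)]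
  exact hCi.trans (mul_le_mul_of_nonneg_left (le_max_left C 1) (hg i).le)

theorem ContinuousLinearMap.exists_opNorm_pow_le_of_norm_eigenvalue_le {V : Type*}
    [NormedAddCommGroup V] [NormedSpace ℂ V] [FiniteDimensional ℂ V] (f : V →L[ℂ] V) {r : ℝ}
    (hr : 1 ≤ r) (hf : ∀ μ, End.HasEigenvalue (f : V →ₗ[ℂ] V) μ → ‖μ‖ ≤ r) :
    ∃ C, 0 < C ∧ ∀ n : ℕ, ‖f ^ n‖ ≤ C * (r ^ n * (1 + n) ^ finrank ℂ V) := by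
  have : CompleteSpace V := FiniteDimensional.complete ℂ V
  refine exists_opNorm_le_mul_of_forall_norm_apply_le_mul (fun n ↦ by positivity) fun v ↦ ?_
  simpa only [← toLinearMap_pow, coe_coe] using Module.End.exists_norm_pow_apply_le hr hf v

theorem Module.End.HasEigenvalue.inv_of_mul_eq_one {K V : Type*} [Field K] [AddCommGroup V]
    [Module K V] {f g : End K V} (hfg : f * g = 1) {μ : K} (hμ : g.HasEigenvalue μ) :
    f.HasEigenvalue μ⁻¹ := by
  obtain ⟨v, hv⟩ := hμ.exists_hasEigenvector
  have hfgv : f (g v) = v := by rw [← Module.End.mul_apply, hfg, Module.End.one_apply]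
  rw [hv.apply_eq_smul, map_smul] at hfgv
  have hμ0 : μ ≠ 0 := by
    rintro rfl
    rw [zero_smul] at hfgv
    exact hv.2 hfgv.symm
  refine hasEigenvalue_of_hasEigenvector ⟨mem_eigenspace_iff.2 ?_, hv.2⟩
  rw [← hfgv, inv_smul_smul₀ hμ0, hfgv]

theorem ContinuousLinearEquiv.toContinuousLinearMap_pow {R M : Type*} [Semiring R]
    [TopologicalSpace M] [AddCommMonoid M] [Module R M] (e : M ≃L[R] M) (n : ℕ) :
    ((e ^ n : M ≃L[R] M) : M →L[R] M) = (e : M →L[R] M) ^ n := by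
  induction n with
  | zero => rfl
  | succ n ih => rw [pow_succ, pow_succ, ← ih]; rfl

/-- Let `V` be a finite-dimensional complex normed vector space of dimension
`d` and `A` an invertible (continuous) linear endomorphism of `V`.  Let `ε ≥ 0` and suppose
every eigenvalue `μ` of `A` satisfies `(1+ε)⁻¹ ≤ |μ| ≤ 1+ε`.  Then there is a constant
`C > 0` such that for all `n : ℤ` the operator norm satisfies
`‖Aⁿ‖ ≤ C * (1+ε)^{|n|} * (1+|n|)^d`. -/
theorem opNorm_zpow_le_of_unimodular_spectrum
    {V : Type*} [NormedAddCommGroup V] [NormedSpace ℂ V] [FiniteDimensional ℂ V]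
    (d : ℕ) (hd : Module.finrank ℂ V = d)
    (A : V ≃L[ℂ] V) (ε : ℝ) (hε : 0 ≤ ε)
    (hspec : ∀ μ : ℂ, Module.End.HasEigenvalue
        ((A : V →L[ℂ] V) : V →ₗ[ℂ] V) μ → (1 + ε)⁻¹ ≤ ‖μ‖ ∧ ‖μ‖ ≤ 1 + ε) :
    ∃ C : ℝ, 0 < C ∧ ∀ n : ℤ,
      ‖((A ^ n : V ≃L[ℂ] V) : V →L[ℂ] V)‖ ≤ C * (1 + ε) ^ |n| * (1 + (|n| : ℝ)) ^ d := by
  subst hd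
  have hr : 1 ≤ 1 + ε := by linarith
  have hinv : ∀ μ, Module.End.HasEigenvalue
      (((A⁻¹ : V ≃L[ℂ] V) : V →L[ℂ] V) : V →ₗ[ℂ] V) μ → ‖μ‖ ≤ 1 + ε := fun μ hμ ↦ by
    have hle := (hspec _ (hμ.inv_of_mul_eq_one (by ext x; exact A.apply_symm_apply x))).1
    have hpos : 0 < ‖μ‖ := by
      rw [norm_inv] at hle
      exact inv_pos.1 ((by positivity : (0 : ℝ) < (1 + ε)⁻¹).trans_le hle)
    rwa [norm_inv, inv_le_inv₀ (by positivity) hpos] at hle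
  obtain ⟨C₁, hC₁, h₁⟩ := (A : V →L[ℂ] V).exists_opNorm_pow_le_of_norm_eigenvalue_le hr
    fun μ hμ ↦ (hspec μ hμ).2
  obtain ⟨C₂, -, h₂⟩ :=
    ((A⁻¹ : V ≃L[ℂ] V) : V →L[ℂ] V).exists_opNorm_pow_le_of_norm_eigenvalue_le hr hinv
  refine ⟨max C₁ C₂, lt_max_of_lt_left hC₁, fun n ↦ ?_⟩
  obtain ⟨m, rfl | rfl⟩ := Int.eq_nat_or_neg n
  · simp only [zpow_natCast, A.toContinuousLinearMap_pow, Nat.abs_cast, Int.cast_natCast]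
    exact (h₁ m).trans (by rw [mul_assoc]; gcongr; exact le_max_left C₁ C₂)
  · simp only [zpow_neg, zpow_natCast, ← inv_pow, ContinuousLinearEquiv.toContinuousLinearMap_pow,
      abs_neg, Nat.abs_cast, Int.cast_neg, Int.cast_natCast]
    exact (h₂ m).trans (by rw [mul_assoc]; gcongr; exact le_max_right C₁ C₂)
end

section
/- Let H be a complex Hilbert space, U : H → H a unitary operator, m ≥ 1 an integer, and A an invertible m×m complex matrix whose powers grow at most polynomially: there exist C > 0 and q ∈ ℕ with ‖Aⁿ‖ ≤ C(1+|n|)^q for all n ∈ ℤ. Let Λ = (Λ_1,…,Λ_m) be a tuple of vectors in H satisfying U Λ_i = Σ_{k=1}^m A_{ik} Λ_k for each i. Suppose that for all i, k, (1+|j|)^q ⟨U^j Λ_k, Λ_i⟩ → 0 as j → ∞. Then Λ_i = 0 for every i. -/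
open Filter

attribute [local instance] Matrix.normedAddCommGroup

/-!
Iterating `U Λ = A Λ` gives `Uⁿ Λ = Aⁿ Λ`, and inverting, `Λ = A⁻ⁿ Uⁿ Λ`. Pairing with `Λ_i` writes
the Gram entry `⟨Λ_i, Λ_i⟩`, which does not depend on `n`, as a sum of products
`conj (A⁻ⁿ)_{ik} ⟨Uⁿ Λ_k, Λ_i⟩`. The first factor is `O((1 + n)^q)` by the growth bound and
`(1 + n)^q ⟨Uⁿ Λ_k, Λ_i⟩ → 0`, so the sum tends to `0` and `‖Λ_i‖² = 0`.
-/

theorem LinearIsometryEquiv.coe_pow {R E : Type*} [Semiring R] [SeminormedAddCommGroup E]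
    [Module R E] (e : E ≃ₗᵢ[R] E) (n : ℕ) : ⇑(e ^ n) = (⇑e)^[n] :=
  hom_coe_pow _ rfl (fun _ _ ↦ rfl) e n

section MatrixCombination

variable {R M ι : Type*} [CommSemiring R] [AddCommMonoid M] [Module R M] [Fintype ι]

theorem Matrix.sum_smul_sum_smul (B A : Matrix ι ι R) (v : ι → M) (i : ι) :
    ∑ k, B i k • ∑ l, A k l • v l = ∑ l, (B * A) i l • v l := by
  simp only [Finset.smul_sum, smul_smul, Matrix.mul_apply, Finset.sum_smul]
  exact Finset.sum_comm

theorem iterate_apply_eq_sum_pow_smul [DecidableEq ι] {F : Type*} [FunLike F M M]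
    [LinearMapClass F R M M] (f : F) (A : Matrix ι ι R) (v : ι → M)
    (hf : ∀ i, f (v i) = ∑ k, A i k • v k) (n : ℕ) (i : ι) :
    (⇑f)^[n] (v i) = ∑ k, (A ^ n) i k • v k := by
  induction n generalizing i with
  | zero => simp [Matrix.one_apply, ite_smul]
  | succ n ih =>
    simp only [Function.iterate_succ_apply', ih, map_sum, map_smul, hf,
      Matrix.sum_smul_sum_smul, pow_succ]

theorem eq_sum_smul_of_mul_eq_one [DecidableEq ι] {B B' : Matrix ι ι R} (hB : B' * B = 1)
    {v w : ι → M} (hw : ∀ i, w i = ∑ k, B i k • v k) (i : ι) :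
    v i = ∑ k, B' i k • w k := by
  simp only [hw, Matrix.sum_smul_sum_smul, hB, Matrix.one_apply, ite_smul, one_smul, zero_smul,
    Finset.sum_ite_eq, Finset.mem_univ, if_true]

end MatrixCombination

theorem Matrix.isBigO_conj_zpow_neg_apply {𝕜 ι : Type*} [RCLike 𝕜] [Fintype ι] [DecidableEq ι]
    {A : Matrix ι ι 𝕜} {C : ℝ} {q : ℕ} (hgrow : ∀ n : ℤ, ‖A ^ n‖ ≤ C * (1 + (|n| : ℝ)) ^ q)
    (i k : ι) :
    (fun n : ℕ ↦ starRingEnd 𝕜 ((A ^ (-(n : ℤ))) i k)) =O[atTop]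
      (fun n : ℕ ↦ ((1 + (n : ℝ)) ^ q : 𝕜)) := by
  refine Asymptotics.IsBigO.of_bound C (Eventually.of_forall fun n ↦ ?_)
  have hnorm : ‖((1 + (n : ℝ)) ^ q : 𝕜)‖ = (1 + (n : ℝ)) ^ q := by
    rw [← RCLike.ofReal_natCast, ← RCLike.ofReal_one, ← RCLike.ofReal_add, ← RCLike.ofReal_pow,
      RCLike.norm_ofReal, abs_of_nonneg (by positivity)]
  rw [RCLike.norm_conj, hnorm]
  simpa using (Matrix.norm_entry_le_entrywise_sup_norm _).trans (hgrow (-(n : ℤ)))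

theorem twisted_eigenvectors_of_decaying_coefficients_eq_zero_general
    {H : Type*} [NormedAddCommGroup H] [InnerProductSpace ℂ H]
    (U : H ≃ₗᵢ[ℂ] H) (m : ℕ)
    (A : Matrix (Fin m) (Fin m) ℂ) (hA : IsUnit A.det)
    (C : ℝ) (q : ℕ)
    (hgrow : ∀ n : ℤ, ‖A ^ n‖ ≤ C * (1 + (|n| : ℝ)) ^ q)
    (Λ : Fin m → H)
    (heq : ∀ i, U (Λ i) = ∑ k, A i k • Λ k)
    (hdecay : ∀ i k, Tendsto
      (fun j : ℕ => ((1 + (j : ℝ)) ^ q : ℂ) * (inner ℂ ((U ^ j) (Λ k)) (Λ i) : ℂ))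
      atTop (nhds 0)) :
    ∀ i, Λ i = 0 := by
  have hpow (n : ℕ) (k : Fin m) : (U ^ n) (Λ k) = ∑ l, (A ^ n) k l • Λ l := by
    rw [LinearIsometryEquiv.coe_pow]
    exact iterate_apply_eq_sum_pow_smul U A Λ heq n k
  have hinv (n : ℕ) : A ^ (-(n : ℤ)) * A ^ n = 1 := by
    rw [← zpow_natCast, ← Matrix.zpow_add hA, neg_add_cancel, zpow_zero]
  intro i
  have hgram (n : ℕ) : inner ℂ (Λ i) (Λ i) =
      ∑ k, starRingEnd ℂ ((A ^ (-(n : ℤ))) i k) * inner ℂ ((U ^ n) (Λ k)) (Λ i) := by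
    nth_rw 1 [eq_sum_smul_of_mul_eq_one (hinv n) (hpow n) i]
    simp only [sum_inner, inner_smul_left]
  have hterms : Tendsto (fun n : ℕ ↦
      ∑ k, starRingEnd ℂ ((A ^ (-(n : ℤ))) i k) * inner ℂ ((U ^ n) (Λ k)) (Λ i)) atTop (nhds 0) := by
    simpa using tendsto_finsetSum Finset.univ fun k _ ↦
      ((Matrix.isBigO_conj_zpow_neg_apply hgrow i k).mul
        (Asymptotics.isBigO_refl _ _)).trans_tendsto (hdecay i k)
  have hself : inner ℂ (Λ i) (Λ i) = (0 : ℂ) :=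
    tendsto_const_nhds_iff.mp (hterms.congr fun n ↦ (hgram n).symm)
  exact inner_self_eq_zero.mp hself

/-- Let `H` be a complex Hilbert space, `U` a unitary operator on `H`,
`m ≥ 1`, and `A` an invertible `m × m` complex matrix whose powers grow at most polynomially:
`‖Aⁿ‖ ≤ C (1 + |n|)^q` for all `n : ℤ`.  Let `Λ = (Λ_1, …, Λ_m)` be vectors of `H` with
`U Λ_i = Σ_k A_{ik} Λ_k` for each `i`.  If `(1 + |j|)^q ⟨U^j Λ_k, Λ_i⟩ → 0` as `j → ∞` for
all `i, k`, then every `Λ_i = 0`. -/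
theorem twisted_eigenvectors_of_decaying_coefficients_eq_zero
    {H : Type*} [NormedAddCommGroup H] [InnerProductSpace ℂ H] [CompleteSpace H]
    (U : H ≃ₗᵢ[ℂ] H) (m : ℕ) (hm : 1 ≤ m)
    (A : Matrix (Fin m) (Fin m) ℂ) (hA : IsUnit A.det)
    (C : ℝ) (hC : 0 < C) (q : ℕ)
    (hgrow : ∀ n : ℤ, ‖A ^ n‖ ≤ C * (1 + (|n| : ℝ)) ^ q)
    (Λ : Fin m → H)
    (heq : ∀ i, U (Λ i) = ∑ k, A i k • Λ k)
    (hdecay : ∀ i k, Tendsto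
      (fun j : ℕ => ((1 + (j : ℝ)) ^ q : ℂ) * (inner ℂ ((U ^ j) (Λ k)) (Λ i) : ℂ))
      atTop (nhds 0)) :
    ∀ i, Λ i = 0 :=
  twisted_eigenvectors_of_decaying_coefficients_eq_zero_general U m A hA C q hgrow Λ heq hdecay
end
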